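/- In any stable matching of a one-to-one marriage market, every student receives a school that is, according to that student's true preferences, weakly worse than the school they receive in the student-optimal stable matching produced by student-proposing deferred acceptance. -/
import Mathlib


/-- A student–school pair blocks matching `μ` if each strictly prefers the other to
their assigned partner (lower rank number = more preferred). -/
def IsStable {n : ℕ} (prefRank : Fin n → Fin n → ℕ) (prioRank : Fin n → Fin n → ℕ)
    (μ : Fin n ≃ Fin n) : Prop :=
  ¬ ∃ (i : Fin n) (s : Fin n),
      prefRank i s < prefRank i (μ i) ∧ prioRank s i < prioRank s (μ.symm s)

namespace DAProof

open Finset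

variable {n : ℕ} (prefRank prioRank : Fin n → Fin n → ℕ)

/-- `s` is student `i`'s favorite school among those that have not rejected `i`
(`R i` is the set of schools that have rejected `i`). -/
def IsTop (R : Fin n → Finset (Fin n)) (i s : Fin n) : Prop :=
  s ∉ R i ∧ ∀ t, t ∉ R i → prefRank i s ≤ prefRank i t

/-- Invariants of the deferred-acceptance rejection state:
* `ach` : if `s` has rejected `i`, then no stable matching assigns `s` to `i`;
* `held` : if `s` has rejected `i`, then some student `j` currently proposes
  to `s` (i.e. `s` is `j`'s top remaining школа) with better priority than `i`. -/
structure Inv (R : Fin n → Finset (Fin n)) : Prop where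
  ach : ∀ i s, s ∈ R i → ∀ ν : Fin n ≃ Fin n, IsStable prefRank prioRank ν → ν i ≠ s
  held : ∀ i s, s ∈ R i → ∃ j, IsTop prefRank R j s ∧ prioRank s j < prioRank s i

lemma isTop_unique (hpref : ∀ i, Function.Injective (prefRank i)) {R : Fin n → Finset (Fin n)} {i s t : Fin n}
    (h1 : IsTop prefRank R i s) (h2 : IsTop prefRank R i t) : s = t :=
  hpref i (le_antisymm (h1.2 t h2.1) (h2.2 s h1.1))

lemma exists_top (hpref : ∀ i, Function.Injective (prefRank i)) {R : Fin n → Finset (Fin n)} (hR : Inv prefRank prioRank R)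
    (i : Fin n) : ∃ s, IsTop prefRank R i s := by
  have hne : ((R i)ᶜ).Nonempty := by
    by_contra h
    rw [Finset.not_nonempty_iff_eq_empty, Finset.compl_eq_empty_iff] at h
    have hf : ∀ s : Fin n, ∃ j, IsTop prefRank R j s ∧ prioRank s j < prioRank s i := by
      intro s
      exact hR.held i s (h ▸ Finset.mem_univ s)
    choose f hf1 hf2 using hf
    have hinj : Function.Injective f := by
      intro s t hst
      exact isTop_unique prefRank hpref (hst ▸ hf1 s) (hf1 t)
    have hsurj : Function.Surjective f := Finite.surjective_of_injective hinj
    obtain ⟨s, hs⟩ := hsurj i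
    have := hf2 s
    rw [hs] at this
    exact lt_irrefl _ this
  obtain ⟨s, hs, hmin⟩ := Finset.exists_min_image ((R i)ᶜ) (prefRank i) hne
  exact ⟨s, Finset.mem_compl.mp hs, fun t ht => hmin t (Finset.mem_compl.mpr ht)⟩

/-- Conclusion when the proposal map is injective: it is a student-optimal
stable matching. -/
lemma finish (hpref : ∀ i, Function.Injective (prefRank i)) {R : Fin n → Finset (Fin n)} (hR : Inv prefRank prioRank R)
    (T : Fin n → Fin n) (hT : ∀ i, IsTop prefRank R i (T i))
    (hTinj : Function.Injective T) :
    ∃ μ0 : Fin n ≃ Fin n, IsStable prefRank prioRank μ0 ∧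
      ∀ ν : Fin n ≃ Fin n, IsStable prefRank prioRank ν →
        ∀ i, prefRank i (μ0 i) ≤ prefRank i (ν i) := by
  have hbij : Function.Bijective T := Finite.injective_iff_bijective.mp hTinj
  refine ⟨Equiv.ofBijective T hbij, ?_, ?_⟩
  · rintro ⟨i, s, h1, h2⟩
    simp only [Equiv.ofBijective_apply] at h1
    have hsRi : s ∈ R i := by
      by_contra h
      exact absurd ((hT i).2 s h) (not_le.mpr h1)
    obtain ⟨j, hj, hjlt⟩ := hR.held i s hsRi
    have hTj : T j = s := isTop_unique prefRank hpref (hT j) hj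
    have hsymm : (Equiv.ofBijective T hbij).symm s = j := by
      rw [Equiv.symm_apply_eq, Equiv.ofBijective_apply, hTj]
    rw [hsymm] at h2
    omega
  · intro ν hν i
    have hni : ν i ∉ R i := fun h => hR.ach i (ν i) h ν hν rfl
    simpa using (hT i).2 (ν i) hni

lemma main_aux (hpref : ∀ i, Function.Injective (prefRank i))
    (hprio : ∀ s, Function.Injective (prioRank s)) : ∀ (k : ℕ) (R : Fin n → Finset (Fin n)), Inv prefRank prioRank R →
    (∑ i, ((R i)ᶜ).card) ≤ k →
    ∃ μ0 : Fin n ≃ Fin n, IsStable prefRank prioRank μ0 ∧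
      ∀ ν : Fin n ≃ Fin n, IsStable prefRank prioRank ν →
        ∀ i, prefRank i (μ0 i) ≤ prefRank i (ν i) := by
  intro k
  induction k with
  | zero =>
    intro R hR hsum
    -- every student has a top school, so all complements would be nonempty;
    -- sum 0 forces n = 0 essentially, where any T is injective.
    have hT' : ∀ i, ∃ s, IsTop prefRank R i s := exists_top prefRank prioRank hpref hR
    choose T hT using hT'
    refine finish prefRank prioRank hpref hR T hT ?_
    intro a b hab
    by_contra hne
    have h1 : ((R a)ᶜ).Nonempty := ⟨T a, Finset.mem_compl.mpr (hT a).1⟩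
    have h2 : 0 < ∑ i, ((R i)ᶜ).card := by
      refine Finset.sum_pos' (fun i _ => Nat.zero_le _) ⟨a, Finset.mem_univ a, ?_⟩
      exact Finset.card_pos.mpr h1
    omega
  | succ k ih =>
    intro R hR hsum
    classical
    have hT' : ∀ i, ∃ s, IsTop prefRank R i s := exists_top prefRank prioRank hpref hR
    choose T hT using hT'
    by_cases hTinj : Function.Injective T
    · exact finish prefRank prioRank hpref hR T hT hTinj
    -- one more round of rejections
    set Cond : Fin n → Prop :=
      fun i => ∃ j, T j = T i ∧ prioRank (T i) j < prioRank (T i) i with hCond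
    set R' : Fin n → Finset (Fin n) :=
      fun i => if Cond i then insert (T i) (R i) else R i with hR'
    have hspec : ∀ i, (¬ Cond i ∧ R' i = R i) ∨ (Cond i ∧ R' i = insert (T i) (R i)) := by
      intro i
      by_cases h : Cond i
      · exact Or.inr ⟨h, if_pos h⟩
      · exact Or.inl ⟨h, if_neg h⟩
    have hsub : ∀ i, R i ⊆ R' i := by
      intro i
      rcases hspec i with ⟨_, h⟩ | ⟨_, h⟩
      · rw [h]
      · rw [h]; exact Finset.subset_insert _ _
    -- a school keeps its best proposer, so "held" witnesses survive
    have hkey : ∀ s i, (∃ j, IsTop prefRank R j s ∧ prioRank s j < prioRank s i) →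
        ∃ j, IsTop prefRank R' j s ∧ prioRank s j < prioRank s i := by
      rintro s i ⟨j, hj, hlt⟩
      have hTj : T j = s := isTop_unique prefRank hpref (hT j) hj
      have hPne : (univ.filter (fun x => T x = s)).Nonempty :=
        ⟨j, by simp [hTj]⟩
      obtain ⟨j', hj'P, hj'min⟩ :=
        Finset.exists_min_image (univ.filter (fun x => T x = s)) (prioRank s) hPne
      have hTj' : T j' = s := (Finset.mem_filter.mp hj'P).2
      have hnc : ¬ Cond j' := by
        rintro ⟨m, hm1, hm2⟩
        have hmP : m ∈ univ.filter (fun x => T x = s) := by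
          simp [hm1, hTj']
        have := hj'min m hmP
        rw [hTj'] at hm2
        omega
      have hR'j' : R' j' = R j' := by
        rcases hspec j' with ⟨_, h⟩ | ⟨hc, _⟩
        · exact h
        · exact absurd hc hnc
      refine ⟨j', ⟨?_, ?_⟩, lt_of_le_of_lt (hj'min j (by simp [hTj])) hlt⟩
      · rw [hR'j', ← hTj']; exact (hT j').1
      · intro t ht
        rw [hR'j'] at ht
        rw [← hTj']
        exact (hT j').2 t ht
    -- the invariants are preserved
    have hInv' : Inv prefRank prioRank R' := by
      constructor
      · intro i s hs ν hν hνi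
        by_cases hold : s ∈ R i
        · exact hR.ach i s hold ν hν hνi
        rcases hspec i with ⟨_, h⟩ | ⟨hc, h⟩
        · rw [h] at hs; exact hold hs
        rw [h, Finset.mem_insert] at hs
        rcases hs with hs | hs
        · -- s = T i was just rejected because of a better proposer j
          obtain ⟨j, hTji, hjlt⟩ := hc
          rw [← hs] at hTji hjlt
          have hji : j ≠ i := by
            intro h'
            rw [h'] at hjlt
            exact lt_irrefl _ hjlt
          have hνj : ν j ≠ s := fun h' => hji (ν.injective (h'.trans hνi.symm))
          have h1 : prefRank j s ≤ prefRank j (ν j) := by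
            by_contra h'
            push_neg at h'
            have hmem : ν j ∈ R j := by
              by_contra h2
              have := (hT j).2 (ν j) h2
              rw [hTji] at this
              omega
            exact hR.ach j (ν j) hmem ν hν rfl
          have h1' : prefRank j s < prefRank j (ν j) :=
            lt_of_le_of_ne h1 (fun h' => hνj (hpref j h').symm)
          have hsymm : ν.symm s = i := by
            rw [Equiv.symm_apply_eq]; exact hνi.symm
          exact hν ⟨j, s, h1', by rw [hsymm]; exact hjlt⟩
        · exact hold hs
      · intro i s hs
        by_cases hold : s ∈ R i
        · exact hkey s i (hR.held i s hold)
        rcases hspec i with ⟨_, h⟩ | ⟨hc, h⟩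
        · rw [h] at hs; exact absurd hs hold
        rw [h, Finset.mem_insert] at hs
        rcases hs with hs | hs
        · obtain ⟨j, hTji, hjlt⟩ := hc
          rw [← hs] at hTji hjlt
          exact hkey s i ⟨j, hTji ▸ hT j, hjlt⟩
        · exact absurd hs hold
    -- the measure strictly decreases
    obtain ⟨a, b, hab, hne⟩ := Function.not_injective_iff.mp hTinj
    have hcc : ∃ c, Cond c := by
      rcases lt_trichotomy (prioRank (T a) a) (prioRank (T a) b) with h | h | h
      · exact ⟨b, a, hab, by rw [← hab]; exact h⟩
      · exact absurd (hprio (T a) h) hne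
      · exact ⟨a, b, hab.symm, h⟩
    obtain ⟨c, hc⟩ := hcc
    have hRc : R' c = insert (T c) (R c) := by
      rcases hspec c with ⟨h, _⟩ | ⟨_, h⟩
      · exact absurd hc h
      · exact h
    have hlt : ((R' c)ᶜ).card < ((R c)ᶜ).card := by
      rw [hRc, Finset.compl_insert]
      exact Finset.card_erase_lt_of_mem (Finset.mem_compl.mpr (hT c).1)
    have hle : ∀ i, ((R' i)ᶜ).card ≤ ((R i)ᶜ).card := by
      intro i
      apply Finset.card_le_card
      intro x hx
      rw [Finset.mem_compl] at hx ⊢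
      exact fun h => hx (hsub i h)
    have hsum' : (∑ i, ((R' i)ᶜ).card) < ∑ i, ((R i)ᶜ).card :=
      Finset.sum_lt_sum (fun i _ => hle i) ⟨c, Finset.mem_univ c, hlt⟩
    exact ih R' hInv' (by omega)

end DAProof

/-- There exists a student-optimal stable matching (the one produced by
student-proposing deferred acceptance): a stable matching that every student weakly
prefers to every stable matching.  In particular, in any stable matching every
student receives a school weakly worse than their school in this matching. -/
theorem exists_student_optimal_stable (n : ℕ)
    (prefRank : Fin n → Fin n → ℕ) (prioRank : Fin n → Fin n → ℕ)
    (hpref : ∀ i, Function.Injective (prefRank i))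
    (hprio : ∀ s, Function.Injective (prioRank s)) :
    ∃ μ0 : Fin n ≃ Fin n, IsStable prefRank prioRank μ0 ∧
      ∀ ν : Fin n ≃ Fin n, IsStable prefRank prioRank ν →
        ∀ i, prefRank i (μ0 i) ≤ prefRank i (ν i) := by
  refine DAProof.main_aux prefRank prioRank hpref hprio (n * n) (fun _ => ∅)
    ⟨by simp, by simp⟩ ?_
  simp [Finset.card_univ]
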